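/- If a man m performs a no-regret push-up manipulation on profile ≻ yielding profile ≻', then with respect to the original preferences, every woman weakly prefers DA(≻') to DA(≻), and every man weakly prefers DA(≻) to DA(≻'). -/

import Mathlib

open Classical

/-- A strict preference list over `Fin n`, encoded as a permutation whose inverse
gives the rank of each alternative (lower rank = more preferred). -/
abbrev Pref (n : ℕ) := Equiv.Perm (Fin n)

/-- A profile of preference lists, one for each of the `n` agents on one side. -/
abbrev Profile (n : ℕ) := Fin n → Pref n

/-- `a` is strictly preferred to `b` under the list `p`. -/
def SPref {n : ℕ} (p : Pref n) (a b : Fin n) : Prop := p.symm a < p.symm b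

/-- `a` is weakly preferred to `b` under the list `p`. -/
def WPref {n : ℕ} (p : Pref n) (a b : Fin n) : Prop := p.symm a ≤ p.symm b

/-- A matching: a bijection from men to women. -/
abbrev Matching (n : ℕ) := Fin n ≃ Fin n

/-- `(m, w)` is a blocking pair of `μ` w.r.t. men's profile `mp` and women's profile `wp`. -/
def Blocks {n : ℕ} (mp wp : Profile n) (μ : Matching n) (m w : Fin n) : Prop :=
  SPref (mp m) w (μ m) ∧ SPref (wp w) m (μ.symm w)

/-- A matching is stable if it admits no blocking pair. -/
def IsStable {n : ℕ} (mp wp : Profile n) (μ : Matching n) : Prop :=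
  ∀ m w, ¬ Blocks mp wp μ m w

instance {n : ℕ} : Nonempty (Matching n) := ⟨Equiv.refl _⟩

/-- The outcome of the men-proposing Deferred Acceptance algorithm, specified as
the (unique) man-optimal stable matching of the instance `⟨mp, wp⟩`. -/
noncomputable def DA {n : ℕ} (mp wp : Profile n) : Matching n :=
  Classical.epsilon fun μ => IsStable mp wp μ ∧
    ∀ μ' : Matching n, IsStable mp wp μ' → ∀ m, WPref (mp m) (μ m) (μ' m)

/-- An accomplice manipulation at strategy profile `p` (men's reports; women truthful
with profile `wp`) by the pair `(m, w)`, via misreport `q` of man `m`: woman `w`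
strictly benefits and man `m` is not worse off, w.r.t. the true profiles `mp`, `wp`. -/
def AccManip {n : ℕ} (mp wp : Profile n) (p : Profile n) (m w : Fin n) (q : Pref n) : Prop :=
  SPref (wp w) ((DA (Function.update p m q) wp).symm w) ((DA p wp).symm w) ∧
  WPref (mp m) (DA (Function.update p m q) wp m) (DA p wp m)

/-- `p` is a Nash equilibrium of the accomplice manipulation game with strategic pairs `P`. -/
def IsNE {n : ℕ} (mp wp : Profile n) (P : Set (Fin n × Fin n)) (p : Profile n) : Prop :=
  ∀ m w, (m, w) ∈ P → ¬ ∃ q, AccManip mp wp p m w q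

/-- `q` results from the list `cur` by a push-up of the set `X` above `star`
(= the current DA partner): the set of women ranked above `star` in `q` is exactly
the set of those ranked above `star` in `cur` together with `X`. -/
def IsPushUp {n : ℕ} (cur : Pref n) (star : Fin n) (X : Set (Fin n)) (q : Pref n) : Prop :=
  ∀ w, SPref q w star ↔ (SPref cur w star ∨ w ∈ X)

/-- One step of the push-up dynamic: some strategic pair `(m, w) ∈ P` performs a
no-regret push-up accomplice manipulation at profile `p`, yielding `p'`. -/
def PushUpStep {n : ℕ} (mp wp : Profile n) (P : Set (Fin n × Fin n))
    (p p' : Profile n) : Prop :=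
  ∃ m w, (m, w) ∈ P ∧ ∃ X q,
    X ⊆ {w' | SPref (p m) (DA p wp m) w'} ∧
    IsPushUp (p m) (DA p wp m) X q ∧
    p' = Function.update p m q ∧
    SPref (wp w) ((DA p' wp).symm w) ((DA p wp).symm w) ∧
    WPref (mp m) (DA p' wp m) (DA p wp m)

/-- A push-up dynamic: starts at the truthful profile, and at each step performs a
no-regret push-up accomplice manipulation by some strategic pair if one exists,
otherwise stays put. -/
def IsPushUpDynamic {n : ℕ} (mp wp : Profile n) (P : Set (Fin n × Fin n))
    (p : ℕ → Profile n) : Prop :=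
  p 0 = mp ∧ ∀ t,
    PushUpStep mp wp P (p t) (p (t + 1)) ∨
    (p (t + 1) = p t ∧ ¬ ∃ p', PushUpStep mp wp P (p t) p')

/-- A one-for-many manipulation at profile `p` by man `m` for beneficiary set `B`,
via misreport `q`: every woman in `B` weakly benefits, some woman in `B` strictly
benefits, and `m` is not worse off (true preferences). -/
def OFMManip {n : ℕ} (mp wp : Profile n) (p : Profile n) (m : Fin n)
    (B : Set (Fin n)) (q : Pref n) : Prop :=
  (∀ w ∈ B, WPref (wp w) ((DA (Function.update p m q) wp).symm w) ((DA p wp).symm w)) ∧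
  (∃ w ∈ B, SPref (wp w) ((DA (Function.update p m q) wp).symm w) ((DA p wp).symm w)) ∧
  WPref (mp m) (DA (Function.update p m q) wp m) (DA p wp m)

/-- Nash equilibrium of the one-for-many manipulation game with strategic men `Pm`
and beneficiary sets `B`. -/
def IsNEOFM {n : ℕ} (mp wp : Profile n) (Pm : Set (Fin n)) (B : Fin n → Set (Fin n))
    (p : Profile n) : Prop :=
  ∀ m ∈ Pm, ¬ ∃ q, OFMManip mp wp p m (B m) q

/-- `q` is obtained from `cur` by promoting (weakly moving up) exactly one man `a`,
leaving the relative order of all other men unchanged. -/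
def Inconspicuous {n : ℕ} (cur q : Pref n) : Prop :=
  ∃ a, (∀ x y, x ≠ a → y ≠ a → (SPref q x y ↔ SPref cur x y)) ∧
    (∀ x, SPref cur a x → SPref q a x)

/-- One step of the inconspicuous dynamic for the woman self-manipulation game:
some strategic woman `w ∈ Pw` performs an optimal inconspicuous self-manipulation
in the current instance `⟨mp, pw⟩`. -/
def InconspicuousStep {n : ℕ} (mp : Profile n) (Pw : Set (Fin n))
    (pw pw' : Profile n) : Prop :=
  ∃ w ∈ Pw, ∃ q,
    pw' = Function.update pw w q ∧
    Inconspicuous (pw w) q ∧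
    SPref (pw w) ((DA mp pw').symm w) ((DA mp pw).symm w) ∧
    ∀ q', WPref (pw w) ((DA mp pw').symm w) ((DA mp (Function.update pw w q')).symm w)

/-- The inconspicuous dynamic of the woman self-manipulation game: starts at the
truthful profile `wp`, and at each step performs an optimal inconspicuous
self-manipulation by some strategic woman if one exists, otherwise stays put. -/
def IsInconspicuousDynamic {n : ℕ} (mp wp : Profile n) (Pw : Set (Fin n))
    (pw : ℕ → Profile n) : Prop :=
  pw 0 = wp ∧ ∀ t,
    InconspicuousStep mp Pw (pw t) (pw (t + 1)) ∨
    (pw (t + 1) = pw t ∧ ¬ ∃ pw', InconspicuousStep mp Pw (pw t) pw')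
/-!
Men-proposing DA is strategy-proof for men (by the blocking lemma of Hwang and Gale–Sotomayor,
whose proof follows a run of the Gale–Shapley algorithm), so under no-regret man `m` keeps
his DA partner. Every woman he truly prefers to her is still ranked above her in his report, so
the new DA matching is stable for the true preferences as well. Man-optimality of DA makes every
man weakly worse off there, and by the opposition of interests in stable matchings every woman
weakly better off.
-/

open Function

section Pref

variable {n : ℕ} {p : Pref n} {a b c : Fin n}

theorem SPref.trans (h₁ : SPref p a b) (h₂ : SPref p b c) : SPref p a c := lt_trans h₁ h₂

theorem SPref.ne (h : SPref p a b) : a ≠ b := by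
  rintro rfl
  exact lt_irrefl _ h

theorem not_spref_iff_wpref : ¬ SPref p a b ↔ WPref p b a := not_lt

theorem WPref.spref_of_ne (h : WPref p a b) (hne : a ≠ b) : SPref p a b :=
  lt_of_le_of_ne h (p.symm.injective.ne hne)

theorem WPref.antisymm (h₁ : WPref p a b) (h₂ : WPref p b a) : a = b :=
  p.symm.injective (le_antisymm h₁ h₂)

end Pref

theorem IsStable.blocks_of_spref {n : ℕ} {mp wp : Profile n} {μ ν : Matching n}
    (hμ : IsStable mp wp μ) {a : Fin n} (ha : SPref (mp a) (ν a) (μ a))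
    (ha' : ¬ SPref (mp (μ.symm (ν a))) (ν (μ.symm (ν a))) (μ (μ.symm (ν a)))) :
    Blocks mp wp ν (μ.symm (ν a)) (ν a) := by
  set a' := μ.symm (ν a)
  have hμa' : μ a' = ν a := μ.apply_symm_apply _
  have hne : a ≠ a' := fun h => ha.ne ((congrArg μ h).trans hμa').symm
  rw [hμa'] at ha'
  refine ⟨(not_spref_iff_wpref.1 ha').spref_of_ne fun h => hne (ν.injective h), ?_⟩
  rw [ν.symm_apply_apply]
  exact (not_spref_iff_wpref.1 fun h => hμ a (ν a) ⟨ha, h⟩).spref_of_ne hne.symm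

namespace GaleShapley

variable {n : ℕ} (mp wp : Profile n)

/-- A state of the algorithm is `σ : Fin n → Fin n`, where `σ a` is the rank (in `mp a`) of the
woman man `a` currently proposes to. -/
def target (σ : Fin n → Fin n) (a : Fin n) : Fin n := mp a (σ a)

def Step (σ σ' : Fin n → Fin n) : Prop :=
  ∃ a b, a ≠ b ∧ target mp σ a = target mp σ b ∧ SPref (wp (target mp σ b)) a b ∧
    ∃ k : Fin n, (k : ℕ) = σ b + 1 ∧ σ' = update σ b k

def RejectionsJustified (σ : Fin n → Fin n) : Prop :=
  ∀ a k, k < σ a → ∃ c, target mp σ c = mp a k ∧ SPref (wp (mp a k)) c a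

variable {mp wp} {σ σ' : Fin n → Fin n}

theorem Step.lt (h : Step mp wp σ σ') : σ < σ' := by
  obtain ⟨-, b, -, -, -, k, hk, rfl⟩ := h
  exact lt_update_self_iff.2 (Fin.lt_def.2 (by omega))

theorem Step.exists_forall_ne (h : Step mp wp σ σ') : ∃ b, ∀ a ≠ b, σ' a = σ a := by
  obtain ⟨-, b, -, -, -, k, -, rfl⟩ := h
  exact ⟨b, fun a ha => update_of_ne ha _ _⟩

theorem RejectionsJustified.step (hI : RejectionsJustified mp wp σ) (hs : Step mp wp σ σ') :
    RejectionsJustified mp wp σ' := by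
  obtain ⟨a, b, hab, hfav, hpref, k, hk, rfl⟩ := hs
  have htarget : ∀ c ≠ b, target mp (update σ b k) c = target mp σ c := fun c hc => by
    simp only [target, update_of_ne hc]
  intro x j hj
  obtain ⟨c, hc, hcx⟩ : ∃ c, target mp σ c = mp x j ∧ SPref (wp (mp x j)) c x := by
    rcases eq_or_ne x b with rfl | hxb
    · rw [update_self] at hj
      rcases (show j ≤ σ x from Fin.le_def.2 (by rw [Fin.lt_def] at hj; omega)).lt_or_eq
        with hj | rfl
      · exact hI x j hj
      · exact ⟨a, hfav, hpref⟩
    · exact hI x j (by rwa [update_of_ne hxb] at hj)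
  rcases eq_or_ne c b with rfl | hcb
  · rw [hc] at hfav hpref
    exact ⟨a, by rw [htarget a hab, hfav], hpref.trans hcx⟩
  · exact ⟨c, by rw [htarget c hcb, hc], hcx⟩

/-- Pigeonhole: the women `b` proposed to before are held by distinct men other than `a`
and `b`. -/
theorem RejectionsJustified.succ_lt (hI : RejectionsJustified mp wp σ) {a b : Fin n}
    (hab : a ≠ b) (hfav : target mp σ a = target mp σ b) : (σ b : ℕ) + 1 < n := by
  choose! holder hholder using hI b
  have hmaps : Set.MapsTo holder (Finset.Iio (σ b) : Set (Fin n))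
      (({a, b} : Finset _)ᶜ : Finset _) := by
    intro k hk
    have hk : k < σ b := by simpa using hk
    have hne : target mp σ (holder k) ≠ target mp σ b := by
      rw [(hholder k hk).1]
      exact (mp b).injective.ne hk.ne
    simp only [Finset.coe_compl, Finset.coe_insert, Finset.coe_singleton, Set.mem_compl_iff,
      Set.mem_insert_iff, Set.mem_singleton_iff, not_or]
    exact ⟨fun h => hne (h ▸ hfav), fun h => hne (h ▸ rfl)⟩
  have hinj : Set.InjOn holder (Finset.Iio (σ b) : Set (Fin n)) := by
    intro k hk k' hk' h
    have hk : k < σ b := by simpa using hk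
    have hk' : k' < σ b := by simpa using hk'
    exact (mp b).injective ((hholder k hk).1.symm.trans (h ▸ (hholder k' hk').1))
  have := Finset.card_le_card_of_injOn holder hmaps hinj
  rw [Fin.card_Iio, Finset.card_compl, Fintype.card_fin, Finset.card_pair hab] at this
  have := b.isLt
  omega

theorem RejectionsJustified.injective_target (hI : RejectionsJustified mp wp σ)
    (hstuck : ¬ ∃ σ', Step mp wp σ σ') : Injective (target mp σ) := by
  intro a b hab
  by_contra hne
  rcases lt_or_gt_of_ne ((wp (target mp σ b)).symm.injective.ne hne) with h | h
  · exact hstuck ⟨_, a, b, hne, hab, h, ⟨_, hI.succ_lt hne hab⟩, rfl, rfl⟩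
  · exact hstuck ⟨_, b, a, Ne.symm hne, hab.symm, hab ▸ h,
      ⟨_, hI.succ_lt (Ne.symm hne) hab.symm⟩, rfl, rfl⟩

variable (mp wp)

noncomputable def next (σ : Fin n → Fin n) : Fin n → Fin n :=
  if h : ∃ σ', Step mp wp σ σ' then h.choose else σ

noncomputable def run : ℕ → Fin n → Fin n
  | 0 => fun a => ⟨0, a.pos⟩
  | t + 1 => next mp wp (run t)

theorem step_next (h : ∃ σ', Step mp wp σ σ') : Step mp wp σ (next mp wp σ) := by
  rw [next, dif_pos h]
  exact h.choose_spec

theorem next_of_not_exists (h : ¬ ∃ σ', Step mp wp σ σ') : next mp wp σ = σ := by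
  rw [next, dif_neg h]

theorem run_monotone : Monotone (run mp wp) := by
  refine monotone_nat_of_le_succ fun t => ?_
  by_cases h : ∃ σ', Step mp wp (run mp wp t) σ'
  · exact (step_next mp wp h).lt.le
  · exact (next_of_not_exists mp wp h).ge

theorem rejectionsJustified_run (t : ℕ) : RejectionsJustified mp wp (run mp wp t) := by
  induction t with
  | zero =>
    intro a k hk
    exact absurd (Fin.lt_def.1 hk) (Nat.not_lt_zero _)
  | succ t ih =>
    by_cases h : ∃ σ', Step mp wp (run mp wp t) σ'
    · exact ih.step (step_next mp wp h)
    · rw [run, next_of_not_exists mp wp h]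
      exact ih

theorem eq_of_run_succ_ne {t : ℕ} {a a' : Fin n} (ha : run mp wp (t + 1) a ≠ run mp wp t a)
    (ha' : run mp wp (t + 1) a' ≠ run mp wp t a') : a = a' := by
  by_cases h : ∃ σ', Step mp wp (run mp wp t) σ'
  · obtain ⟨b, hb⟩ := (step_next mp wp h).exists_forall_ne
    exact (not_imp_comm.1 (hb a) ha).trans (not_imp_comm.1 (hb a') ha').symm
  · exact absurd (congrFun (next_of_not_exists mp wp h) a) ha

/-- Every step strictly increases the state in the finite poset `Fin n → Fin n`. -/
theorem exists_stuck : ∃ T, ¬ ∃ σ', Step mp wp (run mp wp T) σ' := by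
  by_contra! h
  exact not_injective_infinite_finite (run mp wp)
    (strictMono_nat_of_lt_succ fun t => (step_next mp wp (h t)).lt).injective

noncomputable def stopTime : ℕ := (exists_stuck mp wp).choose

noncomputable def final : Fin n → Fin n := run mp wp (stopTime mp wp)

theorem run_eq_final {t : ℕ} (ht : stopTime mp wp ≤ t) : run mp wp t = final mp wp := by
  induction t, ht using Nat.le_induction with
  | base => rfl
  | succ t _ ih =>
    rw [run, ih]
    exact next_of_not_exists mp wp (exists_stuck mp wp).choose_spec

theorem run_le_final (t : ℕ) : run mp wp t ≤ final mp wp := by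
  rcases le_total t (stopTime mp wp) with ht | ht
  · exact run_monotone mp wp ht
  · exact (run_eq_final mp wp ht).le

noncomputable def matching : Matching n :=
  Equiv.ofBijective (target mp (final mp wp)) <| Finite.injective_iff_bijective.mp <|
    (rejectionsJustified_run mp wp _).injective_target (exists_stuck mp wp).choose_spec

theorem matching_apply (a : Fin n) : matching mp wp a = mp a (final mp wp a) := rfl

theorem isStable_matching : IsStable mp wp (matching mp wp) := by
  rintro a w ⟨haw, hwa⟩
  have hlt : (mp a).symm w < final mp wp a := by
    rwa [SPref, matching_apply, Equiv.symm_apply_apply] at haw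
  obtain ⟨c, hc, hcpref⟩ := rejectionsJustified_run mp wp _ a _ hlt
  rw [Equiv.apply_symm_apply] at hc hcpref
  rw [show (matching mp wp).symm w = c from (matching mp wp).symm_apply_eq.2 hc.symm] at hwa
  exact lt_asymm hcpref hwa

theorem exists_run_eq_final (a : Fin n) : ∃ t, run mp wp t a = final mp wp a :=
  ⟨stopTime mp wp, rfl⟩

noncomputable def settleTime (a : Fin n) : ℕ := Nat.find (exists_run_eq_final mp wp a)

theorem run_ne_final_of_lt_settleTime {a : Fin n} {t : ℕ} (ht : t < settleTime mp wp a) :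
    run mp wp t a ≠ final mp wp a :=
  Nat.find_min _ ht

theorem run_eq_final_of_settleTime_le {a : Fin n} {t : ℕ} (ht : settleTime mp wp a ≤ t) :
    run mp wp t a = final mp wp a :=
  le_antisymm (run_le_final mp wp t a)
    ((Nat.find_spec (exists_run_eq_final mp wp a)).symm.le.trans (run_monotone mp wp ht a))

theorem eq_of_settleTime_eq {a a' : Fin n} (h : settleTime mp wp a = settleTime mp wp a')
    (h0 : settleTime mp wp a ≠ 0) : a = a' := by
  obtain ⟨t, ht⟩ : ∃ t, settleTime mp wp a = t + 1 := ⟨settleTime mp wp a - 1, by omega⟩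
  have hchanged : ∀ x, settleTime mp wp x = t + 1 → run mp wp (t + 1) x ≠ run mp wp t x :=
    fun x hx => by
      rw [run_eq_final_of_settleTime_le mp wp hx.le]
      exact (run_ne_final_of_lt_settleTime mp wp (hx ▸ lt_add_one t)).symm
  exact eq_of_run_succ_ne mp wp (hchanged a ht) (hchanged a' (h ▸ ht))

theorem exists_rival {a b : Fin n} (hlt : settleTime mp wp a < settleTime mp wp b)
    (hrank : (mp a).symm (matching mp wp b) < final mp wp a) :
    ∃ c ≠ b, mp c (run mp wp (settleTime mp wp b) c) = matching mp wp b ∧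
      SPref (wp (matching mp wp b)) c a := by
  obtain ⟨t, ht⟩ : ∃ t, settleTime mp wp b = t + 1 := ⟨settleTime mp wp b - 1, by omega⟩
  have hat : run mp wp t a = final mp wp a := run_eq_final_of_settleTime_le mp wp (by omega)
  obtain ⟨c, hc, hcpref⟩ := rejectionsJustified_run mp wp t a _ (hat ▸ hrank)
  rw [Equiv.apply_symm_apply] at hc hcpref
  have hb_moved : run mp wp (t + 1) b ≠ run mp wp t b := by
    rw [← ht, run_eq_final_of_settleTime_le mp wp le_rfl]
    exact (run_ne_final_of_lt_settleTime mp wp (ht ▸ lt_add_one t)).symm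
  have hcb : c ≠ b := by
    rintro rfl
    refine hb_moved ?_
    rw [← ht, run_eq_final_of_settleTime_le mp wp le_rfl]
    exact ((mp c).injective hc).symm
  refine ⟨c, hcb, ?_, hcpref⟩
  rw [ht, not_imp_comm.1 (eq_of_run_succ_ne mp wp · hb_moved) hcb]
  exact hc

/-- The improving man whose final proposal comes last proposes to a woman who already holds a
rival she prefers to her `ν`-partner; that rival blocks `ν`. -/
theorem exists_blocks_of_mapsTo (ν : Matching n)
    (hne : {a | SPref (mp a) (ν a) (matching mp wp a)}.Nonempty)
    (hmaps : Set.MapsTo (fun a => ν.symm (matching mp wp a))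
      {a | SPref (mp a) (ν a) (matching mp wp a)} {a | SPref (mp a) (ν a) (matching mp wp a)}) :
    ∃ x w, ¬ SPref (mp x) (ν x) (matching mp wp x) ∧ Blocks mp wp ν x w := by
  set μ := matching mp wp
  set B := {a | SPref (mp a) (ν a) (μ a)}
  obtain ⟨last, hlast, hmax⟩ := Set.exists_max_image B (settleTime mp wp) B.toFinite hne
  set w := μ last
  set a := ν.symm w
  have ha : SPref (mp a) (ν a) (μ a) := hmaps hlast
  rw [show ν a = w from ν.apply_symm_apply w] at ha
  have hrank : (mp a).symm w < final mp wp a := by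
    rwa [SPref, matching_apply, Equiv.symm_apply_apply] at ha
  have hsettle : settleTime mp wp a < settleTime mp wp last := by
    refine (hmax a (hmaps hlast)).lt_of_ne fun h => ?_
    have ha0 : settleTime mp wp a ≠ 0 := fun h0 => by
      rw [← run_eq_final_of_settleTime_le mp wp h0.le] at hrank
      exact absurd (Fin.lt_def.1 hrank) (Nat.not_lt_zero _)
    have hlast' : SPref (mp last) (ν last) w := hlast
    exact hlast'.ne (by rw [← eq_of_settleTime_eq mp wp h ha0, ν.apply_symm_apply])
  obtain ⟨c, hc_last, hcw, hcpref⟩ := exists_rival mp wp hsettle hrank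
  change mp c _ = w at hcw
  have hc_final : run mp wp (settleTime mp wp last) c ≠ final mp wp c := fun h =>
    hc_last (μ.injective (by rw [matching_apply, ← h, hcw]))
  have hcB : c ∉ B := fun hcB => hc_final (run_eq_final_of_settleTime_le mp wp (hmax c hcB))
  refine ⟨c, w, hcB, ?_, hcpref⟩
  calc (mp c).symm w = run mp wp (settleTime mp wp last) c := by
        rw [← hcw, Equiv.symm_apply_apply]
    _ < (mp c).symm (μ c) := by
      rw [matching_apply, Equiv.symm_apply_apply]
      exact (run_le_final mp wp _ c).lt_of_ne hc_final
    _ ≤ (mp c).symm (ν c) := not_spref_iff_wpref.1 hcB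

theorem exists_blocks_of_spref (ν : Matching n)
    (hne : ∃ a, SPref (mp a) (ν a) (matching mp wp a)) :
    ∃ x w, ¬ SPref (mp x) (ν x) (matching mp wp x) ∧ Blocks mp wp ν x w := by
  set μ := matching mp wp
  set B := {a | SPref (mp a) (ν a) (μ a)}
  by_cases hmaps : Set.MapsTo (fun a => μ.symm (ν a)) B B
  · refine exists_blocks_of_mapsTo mp wp ν hne fun a ha => ?_
    obtain ⟨a', ha', h⟩ := ((B.toFinite.injOn_iff_bijOn_of_mapsTo hmaps).1
      (μ.symm.injective.comp ν.injective).injOn).surjOn ha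
    have : a' = ν.symm (μ a) := ν.eq_symm_apply.2 (μ.symm_apply_eq.1 h)
    show ν.symm (μ a) ∈ B
    rwa [← this]
  · simp only [Set.MapsTo, not_forall] at hmaps
    obtain ⟨a, ha, ha'⟩ := hmaps
    exact ⟨_, _, ha', (isStable_matching mp wp).blocks_of_spref ha ha'⟩

theorem wpref_matching {ν : Matching n} (hν : IsStable mp wp ν) (a : Fin n) :
    WPref (mp a) (matching mp wp a) (ν a) := by
  by_contra h
  obtain ⟨x, w, -, hx⟩ := exists_blocks_of_spref mp wp ν ⟨a, lt_of_not_ge h⟩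
  exact hν x w hx

end GaleShapley

section DeferredAcceptance

variable {n : ℕ} (mp wp : Profile n)

theorem DA_spec : IsStable mp wp (DA mp wp) ∧
    ∀ μ : Matching n, IsStable mp wp μ → ∀ a, WPref (mp a) (DA mp wp a) (μ a) :=
  Classical.epsilon_spec (p := fun μ => IsStable mp wp μ ∧
      ∀ μ' : Matching n, IsStable mp wp μ' → ∀ a, WPref (mp a) (μ a) (μ' a))
    ⟨GaleShapley.matching mp wp, GaleShapley.isStable_matching mp wp,
      fun _ hν => GaleShapley.wpref_matching mp wp hν⟩

theorem isStable_DA : IsStable mp wp (DA mp wp) := (DA_spec mp wp).1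

variable {mp wp}

theorem IsStable.wpref_DA {μ : Matching n} (hμ : IsStable mp wp μ) (a : Fin n) :
    WPref (mp a) (DA mp wp a) (μ a) :=
  (DA_spec mp wp).2 μ hμ a

theorem IsStable.wpref_symm_DA {μ : Matching n} (hμ : IsStable mp wp μ) (w : Fin n) :
    WPref (wp w) (μ.symm w) ((DA mp wp).symm w) := by
  set a := (DA mp wp).symm w
  have hDA : DA mp wp a = w := (DA mp wp).apply_symm_apply w
  refine not_spref_iff_wpref.1 fun hw => hμ a w ⟨?_, hw⟩
  have hwa : WPref (mp a) w (μ a) := hDA ▸ hμ.wpref_DA a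
  exact hwa.spref_of_ne fun h => hw.ne (μ.symm_apply_eq.2 h).symm

variable (mp wp)

theorem DA_eq_matching : DA mp wp = GaleShapley.matching mp wp :=
  Equiv.ext fun a => ((GaleShapley.isStable_matching mp wp).wpref_DA a).antisymm
    (GaleShapley.wpref_matching mp wp (isStable_DA mp wp) a)

theorem not_spref_DA_update (m : Fin n) (q : Pref n) :
    ¬ SPref (mp m) (DA (update mp m q) wp m) (DA mp wp m) := by
  intro h
  rw [DA_eq_matching mp wp] at h
  obtain ⟨x, w, hx, hblocks⟩ := GaleShapley.exists_blocks_of_spref mp wp _ ⟨m, h⟩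
  have hxm : x ≠ m := by
    rintro rfl
    exact hx h
  refine isStable_DA (update mp m q) wp x w ?_
  rwa [Blocks, update_of_ne hxm]

end DeferredAcceptance

theorem IsStable.of_update {n : ℕ} {mp wp : Profile n} {m : Fin n} {q : Pref n}
    {μ : Matching n} (hμ : IsStable (update mp m q) wp μ)
    (hq : ∀ w, SPref (mp m) w (μ m) → SPref q w (μ m)) :
    IsStable mp wp μ := by
  rintro a w ⟨haw, hwa⟩
  refine hμ a w ⟨?_, hwa⟩
  rcases eq_or_ne a m with rfl | ham
  · rw [update_self]
    exact hq w haw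
  · rwa [update_of_ne ham]

theorem pushup_women_better_men_worse_general {n : ℕ} (mp wp : Profile n) (m : Fin n)
    (X : Set (Fin n)) (q : Pref n)
    (hq : IsPushUp (mp m) (DA mp wp m) X q)
    (hnoregret : WPref (mp m) (DA (Function.update mp m q) wp m) (DA mp wp m)) :
    (∀ w, WPref (wp w) ((DA (Function.update mp m q) wp).symm w) ((DA mp wp).symm w)) ∧
    (∀ m', WPref (mp m') (DA mp wp m') (DA (Function.update mp m q) wp m')) := by
  have hpartner : DA (update mp m q) wp m = DA mp wp m :=
    hnoregret.antisymm (not_spref_iff_wpref.1 (not_spref_DA_update mp wp m q))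
  have hstable : IsStable mp wp (DA (update mp m q) wp) :=
    (isStable_DA _ wp).of_update fun w hw => by
      rw [hpartner] at hw ⊢
      exact (hq w).2 (Or.inl hw)
  exact ⟨hstable.wpref_symm_DA, hstable.wpref_DA⟩

theorem pushup_women_better_men_worse {n : ℕ} (mp wp : Profile n) (m : Fin n)
    (X : Set (Fin n)) (q : Pref n)
    (hX : X ⊆ {w | SPref (mp m) (DA mp wp m) w})
    (hq : IsPushUp (mp m) (DA mp wp m) X q)
    (hnoregret : WPref (mp m) (DA (Function.update mp m q) wp m) (DA mp wp m)) :
    (∀ w, WPref (wp w) ((DA (Function.update mp m q) wp).symm w) ((DA mp wp).symm w)) ∧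
    (∀ m', WPref (mp m') (DA mp wp m') (DA (Function.update mp m q) wp m')) :=
  pushup_women_better_men_worse_general mp wp m X q hq hnoregret
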